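/- arXiv:2011.12842 — 3 statements merged into one kernel-verified Lean document; each statement's English description precedes it below -/
import Mathlib

section
/- Fix n ≥ 1 and 0 < ε ≤ 1/2. Let K ⊆ I^n = [0,1]^n and call a map f : K → X ε-tame if for every P = (t₁,…,tₙ) ∈ K, every 1 ≤ j ≤ n and α ∈ {0,1} with |tⱼ - α| ≤ ε and πⱼ^α(P) ∈ K (where πⱼ^α replaces the j-th coordinate by α), one has f(P) = f(πⱼ^α(P)). Then: if f and g are both ε-tame maps from a cubical subcomplex K of I^n to a set X, f = g on K if and only if f = g on the ε-chamber K(ε). -/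
/-- The unit cube `Iⁿ = [0,1]ⁿ`. -/
def cube (n : ℕ) : Set (Fin n → ℝ) := {t | ∀ j, t j ∈ Set.Icc (0 : ℝ) 1}

/-- A face of `Iⁿ`, labelled by `c : Fin n → Option Bool`: coordinate `j` is free if
`c j = none`, and is fixed at `0` (resp. `1`) if `c j = some false` (resp. `some true`). -/
def face {n : ℕ} (c : Fin n → Option Bool) : Set (Fin n → ℝ) :=
  {t | ∀ j, (c j).elim (t j ∈ Set.Icc (0 : ℝ) 1) (fun b => t j = if b then 1 else 0)}

/-- The `ε`-chamber of a face: the free coordinates are restricted to `[ε, 1-ε]`. -/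
def faceChamber {n : ℕ} (ε : ℝ) (c : Fin n → Option Bool) : Set (Fin n → ℝ) :=
  {t | ∀ j, (c j).elim (t j ∈ Set.Icc ε (1 - ε)) (fun b => t j = if b then 1 else 0)}

/-- The cubical subcomplex of `Iⁿ` determined by a set `S` of face labels. -/
def complexOf {n : ℕ} (S : Set (Fin n → Option Bool)) : Set (Fin n → ℝ) :=
  ⋃ c ∈ S, face c

/-- The `ε`-chamber of the subcomplex: the union of the `ε`-chambers of its maximal faces. -/
def chamberOf {n : ℕ} (ε : ℝ) (S : Set (Fin n → Option Bool)) : Set (Fin n → ℝ) :=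
  ⋃ c ∈ {c ∈ S | ∀ c' ∈ S, face c ⊆ face c' → face c = face c'}, faceChamber ε c

/-- `f` is `ε`-tame on `K`: `f(P) = f(πⱼ^α(P))` whenever `|tⱼ - α| ≤ ε` and `πⱼ^α(P) ∈ K`. -/
def IsTameOn {n : ℕ} {X : Type*} (ε : ℝ) (f : (Fin n → ℝ) → X)
    (K : Set (Fin n → ℝ)) : Prop :=
  ∀ t ∈ K, ∀ (j : Fin n) (b : Bool), |t j - (if b then 1 else 0)| ≤ ε →
    Function.update t j (if b then (1 : ℝ) else 0) ∈ K →
    f t = f (Function.update t j (if b then (1 : ℝ) else 0))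

/-!
Tameness lets one move a free coordinate of a point of a face `c ∈ S` within `ε` of `0` or `1`
without changing the value: both the point and its clamp into `[ε, 1 - ε]` project to the same
vertex coordinate, and all these points stay in the face. Clamping every free coordinate of a
point of a maximal face above `c` lands in the `ε`-chamber of that face, so a tame map on `K` is
determined by its values on `K(ε)`.
-/

open Function

lemma faceChamber_subset_face {n : ℕ} {ε : ℝ} (hε : 0 ≤ ε) (c : Fin n → Option Bool) :
    faceChamber ε c ⊆ face c := by
  intro t ht j
  have htj := ht j
  cases hcj : c j with
  | none =>
    simp only [hcj, Option.elim] at htj ⊢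
    exact ⟨hε.trans htj.1, htj.2.trans (by linarith)⟩
  | some b => simpa [hcj] using htj

lemma chamberOf_subset_complexOf {n : ℕ} {ε : ℝ} (hε : 0 ≤ ε) (S : Set (Fin n → Option Bool)) :
    chamberOf ε S ⊆ complexOf S :=
  Set.biUnion_mono (fun _ hc => hc.1) fun c _ => faceChamber_subset_face hε c

lemma exists_maximal_face_superset {n : ℕ} {S : Set (Fin n → Option Bool)}
    {c : Fin n → Option Bool} (hc : c ∈ S) :
    ∃ m ∈ {c ∈ S | ∀ c' ∈ S, face c ⊆ face c' → face c = face c'}, face c ⊆ face m := by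
  obtain ⟨m, ⟨hmS, hcm⟩, hmax⟩ :=
    Set.Finite.exists_maximalFor face {c' ∈ S | face c ⊆ face c'} (Set.toFinite _)
      ⟨c, hc, subset_rfl⟩
  exact ⟨m, ⟨hmS, fun c' hc' hmc' => hmc'.antisymm (hmax ⟨hc', hcm.trans hmc'⟩ hmc')⟩, hcm⟩

lemma update_mem_face {n : ℕ} {c : Fin n → Option Bool} {t : Fin n → ℝ} (ht : t ∈ face c)
    {j : Fin n} (hj : c j = none) {x : ℝ} (hx : x ∈ Set.Icc (0 : ℝ) 1) :
    update t j x ∈ face c := by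
  intro k
  rcases eq_or_ne k j with rfl | hk
  · simpa [hj] using hx
  · simpa [update_of_ne hk] using ht k

def clampOn {n : ℕ} (ε : ℝ) (A : Finset (Fin n)) (t : Fin n → ℝ) : Fin n → ℝ :=
  fun j => if j ∈ A then max ε (min (t j) (1 - ε)) else t j

lemma clampOn_insert {n : ℕ} (ε : ℝ) {A : Finset (Fin n)} {a : Fin n} (ha : a ∉ A)
    (t : Fin n → ℝ) :
    clampOn ε (insert a A) t = update (clampOn ε A t) a (max ε (min (t a) (1 - ε))) := by
  funext k
  rcases eq_or_ne k a with rfl | hk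
  · simp [clampOn]
  · simp [clampOn, hk]

section Clamp

variable {n : ℕ} {ε : ℝ} {c : Fin n → Option Bool} {t : Fin n → ℝ}

lemma clampOn_mem_face (hε : 0 ≤ ε) (hε₂ : ε ≤ 1 - ε) {A : Finset (Fin n)}
    (hA : ∀ j ∈ A, c j = none) (ht : t ∈ face c) : clampOn ε A t ∈ face c := by
  intro j
  by_cases hj : j ∈ A
  · simp only [clampOn, hj, if_true, hA j hj, Option.elim]
    exact ⟨le_max_of_le_left hε, max_le (by linarith) (min_le_right _ _ |>.trans (by linarith))⟩
  · simpa [clampOn, hj] using ht j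

lemma clampOn_free_mem_faceChamber (hε₂ : ε ≤ 1 - ε) (ht : t ∈ face c) :
    clampOn ε {j | c j = none} t ∈ faceChamber ε c := by
  intro j
  cases hcj : c j with
  | none =>
    simp only [clampOn, Finset.mem_filter, Finset.mem_univ, hcj, true_and, if_true, Option.elim]
    exact ⟨le_max_left _ _, max_le hε₂ (min_le_right _ _)⟩
  | some b => simpa [clampOn, hcj] using ht j

end Clamp

namespace IsTameOn

variable {n : ℕ} {X : Type*} {ε : ℝ} {S : Set (Fin n → Option Bool)} {f : (Fin n → ℝ) → X}
  {c : Fin n → Option Bool} {t : Fin n → ℝ} {j : Fin n}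

lemma apply_update_eq_vertex (hf : IsTameOn ε f (complexOf S)) (hc : c ∈ S) (ht : t ∈ face c)
    (hj : c j = none) {α : ℝ} (hα : α = 0 ∨ α = 1) {x : ℝ} (hx : x ∈ Set.Icc (0 : ℝ) 1)
    (hxα : |x - α| ≤ ε) :
    f (update t j x) = f (update t j α) := by
  have hK : face c ⊆ complexOf S := Set.subset_biUnion_of_mem hc
  have hxK := hK (update_mem_face ht hj hx)
  have hαK := hK (update_mem_face ht hj (x := α) (by rcases hα with rfl | rfl <;> simp))
  rcases hα with rfl | rfl
  · simpa [update_idem] using hf _ hxK j false (by simpa using hxα) (by simpa using hαK)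
  · simpa [update_idem] using hf _ hxK j true (by simpa using hxα) (by simpa using hαK)

lemma apply_update_clamp (hε : 0 ≤ ε) (hε₂ : ε ≤ 1 - ε) (hf : IsTameOn ε f (complexOf S))
    (hc : c ∈ S) (ht : t ∈ face c) (hj : c j = none) :
    f t = f (update t j (max ε (min (t j) (1 - ε)))) := by
  obtain ⟨htj₀, htj₁⟩ : t j ∈ Set.Icc (0 : ℝ) 1 := by simpa [hj] using ht j
  have hself : f t = f (update t j (t j)) := by rw [update_eq_self]
  rcases lt_or_ge (t j) ε with hlow | hlow
  · calc f t = f (update t j 0) :=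
          hself.trans <| hf.apply_update_eq_vertex hc ht hj (Or.inl rfl) ⟨htj₀, htj₁⟩
            (abs_le.2 ⟨by linarith, by linarith⟩)
      _ = f (update t j ε) :=
          (hf.apply_update_eq_vertex hc ht hj (Or.inl rfl) ⟨hε, hε₂.trans (by linarith)⟩
            (abs_le.2 ⟨by linarith, by linarith⟩)).symm
      _ = _ := by rw [min_eq_left (by linarith), max_eq_left hlow.le]
  rcases lt_or_ge (1 - ε) (t j) with hhigh | hhigh
  · calc f t = f (update t j 1) :=
          hself.trans <| hf.apply_update_eq_vertex hc ht hj (Or.inr rfl) ⟨htj₀, htj₁⟩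
            (abs_le.2 ⟨by linarith, by linarith⟩)
      _ = f (update t j (1 - ε)) :=
          (hf.apply_update_eq_vertex hc ht hj (Or.inr rfl) ⟨by linarith, by linarith⟩
            (abs_le.2 ⟨by linarith, by linarith⟩)).symm
      _ = _ := by rw [min_eq_right hhigh.le, max_eq_right hε₂]
  · rw [min_eq_left hhigh, max_eq_right hlow, update_eq_self]

lemma apply_clampOn (hε : 0 ≤ ε) (hε₂ : ε ≤ 1 - ε) (hf : IsTameOn ε f (complexOf S))
    (hc : c ∈ S) (A : Finset (Fin n)) (hA : ∀ j ∈ A, c j = none) (ht : t ∈ face c) :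
    f t = f (clampOn ε A t) := by
  induction A using Finset.induction_on with
  | empty => exact congrArg f (funext fun j => by simp [clampOn])
  | insert a A ha ih =>
    have hA' : ∀ j ∈ A, c j = none := fun j hj => hA j (Finset.mem_insert_of_mem hj)
    have hclamped_a : clampOn ε A t a = t a := by simp [clampOn, ha]
    rw [ih hA', clampOn_insert ε ha, ← hclamped_a]
    exact hf.apply_update_clamp hε hε₂ hc (clampOn_mem_face hε hε₂ hA' ht)
      (hA a (Finset.mem_insert_self a A))

end IsTameOn

theorem stmt_5_general {n : ℕ} {X : Type*} (ε : ℝ) (hε : 0 < ε) (hε' : ε ≤ 1 / 2)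
    (S : Set (Fin n → Option Bool)) (f g : (Fin n → ℝ) → X)
    (hf : IsTameOn ε f (complexOf S)) (hg : IsTameOn ε g (complexOf S)) :
    Set.EqOn f g (complexOf S) ↔ Set.EqOn f g (chamberOf ε S) := by
  have hε₂ : ε ≤ 1 - ε := by linarith
  refine ⟨fun h => h.mono (chamberOf_subset_complexOf hε.le S), fun h t ht => ?_⟩
  obtain ⟨c, hc, htc⟩ := Set.mem_iUnion₂.1 ht
  obtain ⟨m, hm, hcm⟩ := exists_maximal_face_superset hc
  have htm : t ∈ face m := hcm htc
  have hfree : ∀ j ∈ ({j | m j = none} : Finset (Fin n)), m j = none := by simp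
  rw [hf.apply_clampOn hε.le hε₂ hm.1 _ hfree htm, hg.apply_clampOn hε.le hε₂ hm.1 _ hfree htm]
  exact h (Set.mem_iUnion₂.2 ⟨m, hm, clampOn_free_mem_faceChamber hε₂ htm⟩)

/-- Uniqueness criterion for tame maps: two `ε`-tame maps on a cubical subcomplex `K`
coincide on `K` iff they coincide on the `ε`-chamber `K(ε)`. -/
theorem stmt_5 {n : ℕ} {X : Type*} (hn : 1 ≤ n) (ε : ℝ) (hε : 0 < ε) (hε' : ε ≤ 1 / 2)
    (S : Set (Fin n → Option Bool)) (f g : (Fin n → ℝ) → X)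
    (hf : IsTameOn ε f (complexOf S)) (hg : IsTameOn ε g (complexOf S)) :
    Set.EqOn f g (complexOf S) ↔ Set.EqOn f g (chamberOf ε S) :=
  stmt_5_general ε hε hε' S f g hf hg
end

section
/- There is no C^∞ retraction from I^n = [0,1]^n onto J^{n-1} = ∂I^{n-1} × I ∪ I^{n-1} × {1} for n ≥ 2; more precisely, there is no smooth map r : I^n → J^{n-1} (smooth in the sense of admitting a smooth extension to an open neighborhood of I^n in ℝ^n) with r(x) = x for all x ∈ J^{n-1}. -/
/-- `Jⁿ = ∂Iⁿ × I ∪ Iⁿ × {1} ⊆ Iⁿ⁺¹`. -/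
def Jset (n : ℕ) : Set (Fin (n + 1) → ℝ) :=
  {t | (∀ j, t j ∈ Set.Icc (0 : ℝ) 1) ∧
    ((∃ j : Fin n, t j.castSucc = 0 ∨ t j.castSucc = 1) ∨ t (Fin.last n) = 1)}

/-- There is no smooth retraction of `Iⁿ⁺¹` onto `Jⁿ` (for `n ≥ 1`, i.e. cubes of
dimension at least `2`), where smooth means the restriction of a `C^∞` map defined on an
open neighborhood of the cube. -/
theorem stmt_9 (n : ℕ) (hn : 1 ≤ n) :
    ¬ ∃ (r : (Fin (n + 1) → ℝ) → (Fin (n + 1) → ℝ)) (U : Set (Fin (n + 1) → ℝ)),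
      IsOpen U ∧ cube (n + 1) ⊆ U ∧ ContDiffOn ℝ (⊤ : ℕ∞) r U ∧
      Set.MapsTo r (cube (n + 1)) (Jset n) ∧
      Set.EqOn r id (Jset n) := by
  rintro ⟨r, U, hU, hUc, hcd, hmaps, heq⟩
  have hlast0 : (Fin.last n) ≠ (0 : Fin (n + 1)) := by
    simp only [ne_eq, Fin.ext_iff, Fin.val_last, Fin.val_zero]
    omega
  -- the corner point
  set q : Fin (n + 1) → ℝ :=
    fun j => if j = 0 then 0 else if j = Fin.last n then 1 else 1 / 2 with hqdef
  have hq_0 : q 0 = 0 := by simp [hqdef]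
  have hq_last : q (Fin.last n) = 1 := by simp [hqdef, hlast0]
  have hq_mid : ∀ j, j ≠ 0 → j ≠ Fin.last n → q j = 1 / 2 := by
    intro j h1 h2; simp [hqdef, h1, h2]
  have hqcube : q ∈ cube (n + 1) := by
    intro j; simp only [hqdef]; split_ifs <;> norm_num
  have hqJ : q ∈ Jset n := ⟨hqcube, Or.inr hq_last⟩
  have hrq : r q = q := heq hqJ
  have hdiff : DifferentiableAt ℝ r q :=
    ((hcd.contDiffAt (hU.mem_nhds (hUc hqcube))).differentiableAt (by simp))
  set A := fderiv ℝ r q with hAdef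
  have hAq : HasFDerivAt r A q := hdiff.hasFDerivAt
  -- key derivative lemma
  have key : ∀ v : Fin (n + 1) → ℝ,
      (∀ᶠ s in nhdsWithin (0 : ℝ) (Set.Ici 0), r (q + s • v) = q + s • v) → A v = v := by
    intro v hv
    have hline : HasDerivAt (fun s : ℝ => q + s • v) v 0 := by
      simpa using (((hasDerivAt_id (0 : ℝ)).smul_const v).const_add q)
    have hq0 : q + (0 : ℝ) • v = q := by simp
    have hAq' : HasFDerivAt r A (q + (0 : ℝ) • v) := by rw [hq0]; exact hAq
    have hcomp : HasDerivWithinAt (fun s : ℝ => r (q + s • v)) (A v) (Set.Ici 0) 0 :=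
      hAq'.comp_hasDerivWithinAt 0 hline.hasDerivWithinAt
    have hcomp2 : HasDerivWithinAt (fun s : ℝ => q + s • v) (A v) (Set.Ici 0) 0 := by
      refine hcomp.congr_of_eventuallyEq ?_ ?_
      · exact hv.mono fun s hs => hs.symm
      · rw [hq0, hrq]
    have hu : UniqueDiffWithinAt ℝ (Set.Ici (0 : ℝ)) 0 :=
      uniqueDiffOn_Ici 0 0 Set.self_mem_Ici
    rw [← hcomp2.derivWithin hu, hline.hasDerivWithinAt.derivWithin hu]
  -- the two tangent vectors
  set v1 : Fin (n + 1) → ℝ := fun j => if j = Fin.last n then -1 else 0 with hv1def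
  set v2 : Fin (n + 1) → ℝ := fun j => if j = 0 then 1 else 0 with hv2def
  have hv1_last : v1 (Fin.last n) = -1 := by simp [hv1def]
  have hv1_ne : ∀ j, j ≠ Fin.last n → v1 j = 0 := by intro j h; simp [hv1def, h]
  have hv2_0 : v2 0 = 1 := by simp [hv2def]
  have hv2_ne : ∀ j, j ≠ 0 → v2 j = 0 := by intro j h; simp [hv2def, h]
  have happ : ∀ (v : Fin (n + 1) → ℝ) (s : ℝ) (j : Fin (n + 1)),
      (q + s • v) j = q j + s * v j := by intro v s j; simp
  have hIcc : Set.Icc (0 : ℝ) 1 ∈ nhdsWithin (0 : ℝ) (Set.Ici 0) :=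
    Icc_mem_nhdsGE_of_mem ⟨le_refl 0, one_pos⟩
  have hzeroc : (⟨0, hn⟩ : Fin n).castSucc = (0 : Fin (n + 1)) := by
    simp [Fin.ext_iff]
  -- A v1 = v1
  have hA1 : A v1 = v1 := by
    refine key v1 (Filter.eventually_of_mem hIcc fun s hs => ?_)
    refine heq ⟨fun j => ?_, Or.inl ⟨⟨0, hn⟩, Or.inl ?_⟩⟩
    · rw [happ, Set.mem_Icc]
      rcases eq_or_ne j (Fin.last n) with h2 | h2
      · rw [h2, hq_last, hv1_last]
        constructor <;> [linarith [hs.2]; linarith [hs.1]]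
      · rw [hv1_ne j h2, mul_zero, add_zero]
        rcases eq_or_ne j 0 with h | h
        · rw [h, hq_0]; norm_num
        · rw [hq_mid j h h2]; norm_num
    · rw [hzeroc, happ, hq_0, hv1_ne 0 hlast0.symm, mul_zero, add_zero]
  -- A v2 = v2
  have hA2 : A v2 = v2 := by
    refine key v2 (Filter.eventually_of_mem hIcc fun s hs => ?_)
    refine heq ⟨fun j => ?_, Or.inr ?_⟩
    · rw [happ, Set.mem_Icc]
      rcases eq_or_ne j 0 with h | h
      · rw [h, hq_0, hv2_0, mul_one, zero_add]
        exact ⟨hs.1, hs.2⟩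
      · rw [hv2_ne j h, mul_zero, add_zero]
        rcases eq_or_ne j (Fin.last n) with h2 | h2
        · rw [h2, hq_last]; norm_num
        · rw [hq_mid j h h2]; norm_num
    · rw [happ, hq_last, hv2_ne _ hlast0, mul_zero, add_zero]
  -- the inward vector
  set w : Fin (n + 1) → ℝ := v1 + v2 with hwdef
  have hAw : A w = w := by rw [hwdef, map_add, hA1, hA2]
  have hw0 : w 0 = 1 := by
    rw [hwdef, Pi.add_apply, hv1_ne 0 hlast0.symm, hv2_0, zero_add]
  have hwlast : w (Fin.last n) = -1 := by
    rw [hwdef, Pi.add_apply, hv1_last, hv2_ne _ hlast0, add_zero]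
  have hwmid : ∀ j, j ≠ 0 → j ≠ Fin.last n → w j = 0 := by
    intro j h1 h2
    rw [hwdef, Pi.add_apply, hv1_ne j h2, hv2_ne j h1, add_zero]
  -- derivative of s ↦ r (q + s w)
  have hq0w : q + (0 : ℝ) • w = q := by simp
  have hAq'' : HasFDerivAt r A (q + (0 : ℝ) • w) := by rw [hq0w]; exact hAq
  have hlinew : HasDerivAt (fun s : ℝ => q + s • w) w 0 := by
    simpa using (((hasDerivAt_id (0 : ℝ)).smul_const w).const_add q)
  have hgder : HasDerivWithinAt (fun s : ℝ => r (q + s • w)) w (Set.Ici 0) 0 := by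
    have h : HasDerivWithinAt (fun s : ℝ => r (q + s • w)) (A w) (Set.Ici 0) 0 :=
      hAq''.comp_hasDerivWithinAt 0 hlinew.hasDerivWithinAt
    rwa [hAw] at h
  have hg0 : r (q + (0 : ℝ) • w) = q := by rw [hq0w, hrq]
  -- coordinatewise derivatives
  have hco : ∀ j : Fin (n + 1),
      HasDerivWithinAt (fun s : ℝ => r (q + s • w) j) (w j) (Set.Ici 0) 0 := by
    intro j
    have := (ContinuousLinearMap.proj (R := ℝ) (φ := fun _ : Fin (n + 1) => ℝ)
      j).hasFDerivAt.comp_hasDerivWithinAt 0 hgder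
    exact this
  -- slope facts
  have hdiffle : nhdsWithin (0 : ℝ) (Set.Ioi 0) ≤ nhdsWithin 0 (Set.Ici 0) :=
    nhdsWithin_mono 0 Set.Ioi_subset_Ici_self
  have hslope : ∀ j : Fin (n + 1),
      Filter.Tendsto (slope (fun s : ℝ => r (q + s • w) j) 0)
        (nhdsWithin (0 : ℝ) (Set.Ioi 0)) (nhds (w j)) := by
    intro j
    have := hasDerivWithinAt_iff_tendsto_slope.mp (hco j)
    rwa [Set.Ici_sdiff_left] at this
  have hself : ∀ᶠ s in nhdsWithin (0 : ℝ) (Set.Ioi 0), (0 : ℝ) < s :=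
    eventually_mem_nhdsWithin
  -- coordinate 0 is eventually positive
  have hpos0 : ∀ᶠ s in nhdsWithin (0 : ℝ) (Set.Ioi 0), 0 < r (q + s • w) 0 := by
    have h1 : ∀ᶠ s in nhdsWithin (0 : ℝ) (Set.Ioi 0),
        0 < slope (fun s : ℝ => r (q + s • w) 0) 0 s := by
      refine (hslope 0).eventually (lt_mem_nhds ?_)
      rw [hw0]; norm_num
    filter_upwards [h1, hself] with s hs hspos
    rw [slope_def_field] at hs
    have hq00 : r (q + (0 : ℝ) • w) 0 = 0 := by rw [hg0, hq_0]
    rw [hq00, sub_zero, sub_zero] at hs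
    have := mul_pos hs hspos
    rwa [div_mul_cancel₀ _ (ne_of_gt hspos)] at this
  -- last coordinate eventually < 1
  have hlt1last : ∀ᶠ s in nhdsWithin (0 : ℝ) (Set.Ioi 0),
      r (q + s • w) (Fin.last n) < 1 := by
    have h1 : ∀ᶠ s in nhdsWithin (0 : ℝ) (Set.Ioi 0),
        slope (fun s : ℝ => r (q + s • w) (Fin.last n)) 0 s < 0 := by
      refine (hslope (Fin.last n)).eventually (gt_mem_nhds ?_)
      rw [hwlast]; norm_num
    filter_upwards [h1, hself] with s hs hspos
    rw [slope_def_field] at hs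
    have hq0l : r (q + (0 : ℝ) • w) (Fin.last n) = 1 := by rw [hg0, hq_last]
    rw [hq0l, sub_zero] at hs
    have := mul_neg_of_neg_of_pos hs hspos
    rw [div_mul_cancel₀ _ (ne_of_gt hspos)] at this
    linarith
  -- coordinate 0 eventually < 1 (by continuity)
  have hlt10 : ∀ᶠ s in nhdsWithin (0 : ℝ) (Set.Ioi 0), r (q + s • w) 0 < 1 := by
    have hc : Filter.Tendsto (fun s : ℝ => r (q + s • w) 0)
        (nhdsWithin (0 : ℝ) (Set.Ici 0)) (nhds (r (q + (0 : ℝ) • w) 0)) :=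
      (hco 0).continuousWithinAt
    have hq00 : r (q + (0 : ℝ) • w) 0 = 0 := by rw [hg0, hq_0]
    rw [hq00] at hc
    exact ((hc.eventually (gt_mem_nhds one_pos)).filter_mono hdiffle)
  -- middle coordinates eventually in (0,1)
  have hmid : ∀ᶠ s in nhdsWithin (0 : ℝ) (Set.Ioi 0),
      ∀ j : Fin (n + 1), j ≠ 0 → j ≠ Fin.last n →
        r (q + s • w) j ∈ Set.Ioo (0 : ℝ) 1 := by
    rw [Filter.eventually_all]
    intro j
    rcases eq_or_ne j 0 with h | h
    · exact Filter.Eventually.of_forall fun s hj _ => absurd h hj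
    rcases eq_or_ne j (Fin.last n) with h2 | h2
    · exact Filter.Eventually.of_forall fun s _ hj => absurd h2 hj
    have hc : Filter.Tendsto (fun s : ℝ => r (q + s • w) j)
        (nhdsWithin (0 : ℝ) (Set.Ici 0)) (nhds (r (q + (0 : ℝ) • w) j)) :=
      (hco j).continuousWithinAt
    have hq0j : r (q + (0 : ℝ) • w) j = 1 / 2 := by rw [hg0, hq_mid j h h2]
    rw [hq0j] at hc
    have hmem : Set.Ioo (0 : ℝ) 1 ∈ nhds (1 / 2 : ℝ) :=
      Ioo_mem_nhds (by norm_num) (by norm_num)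
    exact ((hc.eventually hmem).filter_mono hdiffle).mono fun s hs _ _ => hs
  -- eventually in the cube
  have hcubemem : ∀ᶠ s in nhdsWithin (0 : ℝ) (Set.Ioi 0),
      q + s • w ∈ cube (n + 1) := by
    refine Filter.eventually_of_mem
      (Ioc_mem_nhdsGT_of_mem ⟨le_refl 0, by norm_num⟩ :
        Set.Ioc (0 : ℝ) (1 / 2) ∈ nhdsWithin 0 (Set.Ioi 0)) fun s hs => ?_
    intro j
    rw [happ, Set.mem_Icc]
    rcases eq_or_ne j 0 with h | h
    · rw [h, hq_0, hw0, mul_one, zero_add]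
      constructor <;> [linarith [hs.1]; linarith [hs.2]]
    rcases eq_or_ne j (Fin.last n) with h2 | h2
    · rw [h2, hq_last, hwlast]
      constructor <;> [linarith [hs.2]; linarith [hs.1]]
    · rw [hwmid j h h2, mul_zero, add_zero, hq_mid j h h2]
      norm_num
  -- combine and derive contradiction
  obtain ⟨s, hs0, hslt1l, hs01, hsmid, hscube⟩ :=
    (hpos0.and (hlt1last.and (hlt10.and (hmid.and hcubemem)))).exists
  obtain ⟨-, hor⟩ := hmaps hscube
  rcases hor with ⟨j, hj⟩ | hj
  · rcases eq_or_ne j.castSucc 0 with hc | hc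
    · rw [hc] at hj
      rcases hj with hj | hj
      · exact absurd hj (ne_of_gt hs0)
      · exact absurd hj (ne_of_lt hs01)
    · have hcl : j.castSucc ≠ Fin.last n := ne_of_lt (Fin.castSucc_lt_last j)
      have := hsmid j.castSucc hc hcl
      rcases hj with hj | hj
      · exact absurd hj (ne_of_gt this.1)
      · exact absurd hj (ne_of_lt this.2)
  · exact absurd hj (ne_of_lt hslt1l)
end

section
/- For a pointed topological (or diffeological) space (X, x₀) and n ≥ 0, the map sending a class of f : (I^n, ∂I^n) → (X, x₀) to the class of the map ∂I^{n+1} → X that equals f on I^n × {0} and is constant x₀ on J^n induces a natural bijection πₙ(X, x₀) ≅ [∂I^{n+1}, e ; X, x₀], the set of (smooth) homotopy classes of maps (∂I^{n+1}, e) → (X, x₀), where e = (1,…,1) ∈ ∂I^{n+1}. -/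
/-- The boundary `∂Iⁿ`. -/
def bdry (n : ℕ) : Set (Fin n → ℝ) := {t | t ∈ cube n ∧ ∃ j, t j = 0 ∨ t j = 1}

variable {X : Type*} [TopologicalSpace X]

/-- A representative of an element of `πₙ(X, x₀)`: a continuous map `(Iⁿ, ∂Iⁿ) → (X, x₀)`. -/
def IsAbsMap (n : ℕ) (x₀ : X) (f : (Fin n → ℝ) → X) : Prop :=
  Continuous f ∧ (∀ t ∈ bdry n, f t = x₀)

/-- Homotopy through maps `(Iⁿ, ∂Iⁿ) → (X, x₀)`. -/
def AbsHtp (n : ℕ) (x₀ : X) (f g : {f : (Fin n → ℝ) → X // IsAbsMap n x₀ f}) : Prop :=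
  ∃ H : (Fin n → ℝ) × ℝ → X, Continuous H ∧
    (∀ t ∈ cube n, H (t, 0) = f.1 t) ∧ (∀ t ∈ cube n, H (t, 1) = g.1 t) ∧
    (∀ s ∈ Set.Icc (0 : ℝ) 1, ∀ t ∈ bdry n, H (t, s) = x₀)

/-- The corner point `e = (1,…,1)` of `∂Iⁿ⁺¹`. -/
def cornerPt (n : ℕ) : bdry (n + 1) :=
  ⟨fun _ => 1, fun _ => ⟨zero_le_one, le_refl 1⟩, ⟨0, Or.inr rfl⟩⟩

/-- A representative of an element of `[∂Iⁿ⁺¹, e ; X, x₀]`: a continuous map on the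
boundary of the cube sending `e` to `x₀`. -/
def IsSphMap (n : ℕ) (x₀ : X) (f : bdry (n + 1) → X) : Prop :=
  Continuous f ∧ f (cornerPt n) = x₀

/-- Homotopy through maps `(∂Iⁿ⁺¹, e) → (X, x₀)`. -/
def SphHtp (n : ℕ) (x₀ : X) (f g : {f : bdry (n + 1) → X // IsSphMap n x₀ f}) : Prop :=
  ∃ H : (bdry (n + 1)) × ℝ → X, Continuous H ∧
    (∀ t, H (t, 0) = f.1 t) ∧ (∀ t, H (t, 1) = g.1 t) ∧
    (∀ s ∈ Set.Icc (0 : ℝ) 1, H (cornerPt n, s) = x₀)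

/-- The map which extends `f : (Iⁿ, ∂Iⁿ) → (X, x₀)` over `∂Iⁿ⁺¹` by `f` on `Iⁿ × {0}`
and the constant `x₀` on `Jⁿ`. -/
noncomputable def sphExt (n : ℕ) (x₀ : X) (f : (Fin n → ℝ) → X) :
    bdry (n + 1) → X := fun p =>
  if p.1 (Fin.last n) = 0 then f (fun j => p.1 j.castSucc) else x₀

/-!
In the coordinates `y = 2p - 1`, `∂Iⁿ⁺¹` is the unit sphere of the sup norm and `e` is the vector
`1`. The sphere deforms, fixing `e` and keeping `Jⁿ` inside `Jⁿ`, to a map that collapses `Jⁿ`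
to `e`: first raise the last coordinate at speed `‖Fin.init y‖`, which carries `Jⁿ` into the
top face, then push the top face straight to `e`; after each stage project radially back to the
sphere. The two stages are needed because the straight push to `e` would pass through `0` at the
antipode `-1 ∈ Jⁿ`.

Collapsing `Jⁿ` with this deformation and restricting to the bottom face inverts the extension by
`x₀` up to homotopy. In both directions, the homotopy is the deformation run backwards.
-/

section SupNorm

lemma exists_norm_apply_eq_norm {k : ℕ} {x : Fin k → ℝ} (hx : x ≠ 0) : ∃ j, ‖x j‖ = ‖x‖ := by
  have : Nonempty (Fin k) := by
    by_contra h
    have := not_nonempty_iff.1 h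
    exact hx (Subsingleton.elim _ _)
  exact (IsGreatest.pi_norm x).1

lemma norm_eq_max_init_last {n : ℕ} (y : Fin (n + 1) → ℝ) :
    ‖y‖ = max ‖Fin.init y‖ ‖y (Fin.last n)‖ := by
  refine le_antisymm ((pi_norm_le_iff_of_nonneg (by positivity)).2 fun j => ?_) ?_
  · induction j using Fin.lastCases with
    | last => exact le_max_right _ _
    | cast i => exact (norm_le_pi_norm (Fin.init y) i).trans (le_max_left _ _)
  · exact max_le ((pi_norm_le_iff_of_nonneg (norm_nonneg _)).2 fun i => norm_le_pi_norm y _)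
      (norm_le_pi_norm y _)

end SupNorm

section Recenter

variable {k : ℕ}

def recenter (p : Fin k → ℝ) : Fin k → ℝ := fun j => 2 * p j - 1

lemma continuous_recenter : Continuous (recenter (k := k)) := by
  unfold recenter; fun_prop

lemma norm_recenter_le_one_iff {p : Fin k → ℝ} : ‖recenter p‖ ≤ 1 ↔ p ∈ cube k := by
  simp only [pi_norm_le_iff_of_nonneg zero_le_one, recenter, Real.norm_eq_abs, abs_le, cube,
    Set.mem_Icc]
  refine forall_congr' fun j => ?_
  constructor <;> intro h <;> constructor <;> linarith [h.1, h.2]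

lemma abs_two_mul_sub_one_eq_one {a : ℝ} : |2 * a - 1| = 1 ↔ a = 0 ∨ a = 1 := by
  rw [abs_eq zero_le_one]
  constructor <;> rintro (h | h) <;> [right; left; right; left] <;> linarith

lemma mem_bdry_iff {p : Fin k → ℝ} : p ∈ bdry k ↔ ‖recenter p‖ = 1 := by
  constructor
  · rintro ⟨hp, j, hj⟩
    refine le_antisymm (norm_recenter_le_one_iff.2 hp) ?_
    calc (1 : ℝ) = ‖recenter p j‖ := by
          rw [Real.norm_eq_abs, recenter, abs_two_mul_sub_one_eq_one.2 hj]
      _ ≤ ‖recenter p‖ := norm_le_pi_norm _ j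
  · intro h
    refine ⟨norm_recenter_le_one_iff.1 h.le, ?_⟩
    obtain ⟨j, hj⟩ := exists_norm_apply_eq_norm (x := recenter p) (by
      rintro h0; simp [h0] at h)
    exact ⟨j, abs_two_mul_sub_one_eq_one.1 (by rw [← Real.norm_eq_abs]; exact hj.trans h)⟩

noncomputable def bdryHomeo (k : ℕ) : bdry k ≃ₜ Metric.sphere (0 : Fin k → ℝ) 1 where
  toFun p := ⟨recenter p.1, by simpa using mem_bdry_iff.1 p.2⟩
  invFun y := ⟨fun j => (y.1 j + 1) / 2, mem_bdry_iff.2 (by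
    have h : recenter (fun j => (y.1 j + 1) / 2) = y.1 := by
      funext j; simp only [recenter]; ring
    simp [h])⟩
  left_inv p := by ext j; simp only [recenter]; ring
  right_inv y := by ext j; simp only [recenter]; ring
  continuous_toFun := (continuous_recenter.comp continuous_subtype_val).subtype_mk _
  continuous_invFun := by
    refine Continuous.subtype_mk (continuous_pi fun j => ?_) _
    exact (((continuous_apply j).comp continuous_subtype_val).add continuous_const).div_const 2

lemma bdryHomeo_apply (p : bdry k) : (bdryHomeo k p : Fin k → ℝ) = recenter p.1 := rfl

lemma norm_recenter_val (p : bdry k) : ‖recenter p.1‖ = 1 := mem_bdry_iff.1 p.2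

end Recenter

section CapJ

variable {n : ℕ} {y : Fin (n + 1) → ℝ}

/-- On the sphere `‖y‖ = 1`, that is on `∂Iⁿ⁺¹` in the coordinates `y = 2p - 1`, this is
`Jⁿ = ∂Iⁿ × I ∪ Iⁿ × {1}`: it misses exactly the open bottom face. -/
def capJ (n : ℕ) : Set (Fin (n + 1) → ℝ) := {y | -‖Fin.init y‖ ≤ y (Fin.last n)}

lemma isClosed_capJ : IsClosed (capJ n) :=
  isClosed_le (by unfold Fin.init; fun_prop) (continuous_apply _)

lemma smul_mem_capJ {c : ℝ} (hc : 0 ≤ c) (hy : y ∈ capJ n) : c • y ∈ capJ n := by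
  change -‖c • Fin.init y‖ ≤ c * y (Fin.last n)
  rw [norm_smul, Real.norm_of_nonneg hc, ← mul_neg]
  exact mul_le_mul_of_nonneg_left hy hc

lemma norm_init_eq_one_or_abs_last_eq_one (hy : ‖y‖ = 1) :
    ‖Fin.init y‖ = 1 ∨ |y (Fin.last n)| = 1 := by
  rw [norm_eq_max_init_last] at hy
  rw [← Real.norm_eq_abs]
  rcases max_choice ‖Fin.init y‖ ‖y (Fin.last n)‖ with h | h <;> rw [h] at hy <;> tauto

lemma mem_capJ_of_last_ne (hy : ‖y‖ = 1) (h : y (Fin.last n) ≠ -1) : y ∈ capJ n := by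
  rcases norm_init_eq_one_or_abs_last_eq_one hy with h1 | h1
  · have hlast : |y (Fin.last n)| ≤ 1 := hy ▸ norm_le_pi_norm y _
    show -‖Fin.init y‖ ≤ y (Fin.last n)
    rw [h1]
    linarith [neg_abs_le (y (Fin.last n))]
  · rcases abs_eq zero_le_one |>.1 h1 with h2 | h2
    · show -‖Fin.init y‖ ≤ y (Fin.last n)
      rw [h2]; linarith [norm_nonneg (Fin.init y)]
    · exact absurd h2 h

lemma norm_init_eq_one_or_last_eq_one (hy : ‖y‖ = 1) (hJ : y ∈ capJ n) :
    ‖Fin.init y‖ = 1 ∨ y (Fin.last n) = 1 := by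
  have hinit : ‖Fin.init y‖ ≤ 1 := hy ▸ (norm_eq_max_init_last y ▸ le_max_left _ _)
  rcases norm_init_eq_one_or_abs_last_eq_one hy with h1 | h1
  · exact Or.inl h1
  · rcases abs_eq zero_le_one |>.1 h1 with h2 | h2
    · exact Or.inr h2
    · have : -‖Fin.init y‖ ≤ -1 := h2 ▸ hJ
      exact Or.inl (le_antisymm hinit (by linarith))

end CapJ

section RadialProj

variable {E : Type*} [NormedAddCommGroup E] [NormedSpace ℝ E] {w : E}

noncomputable def radialProj (w : E) : E := ‖w‖⁻¹ • w

lemma norm_radialProj (hw : w ≠ 0) : ‖radialProj w‖ = 1 := norm_smul_inv_norm hw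

lemma radialProj_of_norm_eq_one (hw : ‖w‖ = 1) : radialProj w = w := by
  rw [radialProj, hw, inv_one, one_smul]

lemma Continuous.radialProj {α : Type*} [TopologicalSpace α] {F : α → E} (hF : Continuous F)
    (h0 : ∀ a, F a ≠ 0) : Continuous fun a => radialProj (F a) :=
  (hF.norm.inv₀ fun a => norm_ne_zero_iff.2 (h0 a)).smul hF

lemma radialProj_mem_capJ {n : ℕ} {y : Fin (n + 1) → ℝ} (hy : y ∈ capJ n) :
    radialProj y ∈ capJ n :=
  smul_mem_capJ (inv_nonneg.2 (norm_nonneg y)) hy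

end RadialProj

section Deformation

variable {n : ℕ} {y : Fin (n + 1) → ℝ} {t : ℝ}

noncomputable def liftVec (y : Fin (n + 1) → ℝ) (t : ℝ) : Fin (n + 1) → ℝ :=
  Function.update y (Fin.last n) (y (Fin.last n) + t * ‖Fin.init y‖ * (1 - y (Fin.last n)))

lemma continuous_liftVec : Continuous fun z : (Fin (n + 1) → ℝ) × ℝ => liftVec z.1 z.2 := by
  unfold liftVec Fin.init
  fun_prop

lemma init_liftVec : Fin.init (liftVec y t) = Fin.init y := Fin.init_update_last _ _

lemma liftVec_last : liftVec y t (Fin.last n) =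
    y (Fin.last n) + t * ‖Fin.init y‖ * (1 - y (Fin.last n)) :=
  Function.update_self _ _ _

lemma liftVec_of_init_eq_zero (h : Fin.init y = 0) : liftVec y t = y := by
  rw [liftVec, h, norm_zero, mul_zero, zero_mul, add_zero, Function.update_eq_self]

lemma liftVec_of_last_eq_one (h : y (Fin.last n) = 1) : liftVec y t = y := by
  rw [liftVec, h, sub_self, mul_zero, add_zero, ← h, Function.update_eq_self]

lemma liftVec_zero : liftVec y 0 = y := by
  rw [liftVec, zero_mul, zero_mul, add_zero, Function.update_eq_self]

lemma liftVec_ne_zero (hy : y ≠ 0) : liftVec y t ≠ 0 := by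
  intro h
  have hinit : Fin.init y = 0 := by rw [← init_liftVec (t := t), h]; rfl
  exact hy (liftVec_of_init_eq_zero hinit ▸ h)

lemma liftVec_mem_capJ (hy : ‖y‖ = 1) (ht : 0 ≤ t) (hJ : y ∈ capJ n) : liftVec y t ∈ capJ n := by
  have hlast : y (Fin.last n) ≤ 1 := (le_abs_self _).trans (hy ▸ norm_le_pi_norm y _)
  change -‖Fin.init (liftVec y t)‖ ≤ liftVec y t (Fin.last n)
  rw [init_liftVec, liftVec_last]
  have : 0 ≤ t * ‖Fin.init y‖ * (1 - y (Fin.last n)) := by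
    have := norm_nonneg (Fin.init y)
    have : 0 ≤ 1 - y (Fin.last n) := by linarith
    positivity
  exact hJ.trans (le_add_of_nonneg_right this)

lemma liftVec_one (hy : ‖y‖ = 1) (hJ : y ∈ capJ n) :
    liftVec y 1 = Function.update y (Fin.last n) 1 := by
  rw [liftVec]
  congr 1
  rcases norm_init_eq_one_or_last_eq_one hy hJ with h | h <;> rw [h] <;> ring

lemma norm_update_last_one (hy : ‖y‖ = 1) : ‖Function.update y (Fin.last n) 1‖ = 1 := by
  rw [norm_eq_max_init_last, Fin.init_update_last, Function.update_self, norm_one]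
  exact max_eq_right (hy ▸ (norm_eq_max_init_last y ▸ le_max_left _ _))

noncomputable def pushVec (y : Fin (n + 1) → ℝ) (t : ℝ) : Fin (n + 1) → ℝ :=
  y + (t * max (y (Fin.last n)) 0) • (1 - y)

lemma continuous_pushVec : Continuous fun z : (Fin (n + 1) → ℝ) × ℝ => pushVec z.1 z.2 := by
  unfold pushVec
  fun_prop

lemma pushVec_zero : pushVec y 0 = y := by
  rw [pushVec, zero_mul, zero_smul, add_zero]

lemma pushVec_one_left : pushVec (1 : Fin (n + 1) → ℝ) t = 1 := by
  rw [pushVec, sub_self, smul_zero, add_zero]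

lemma pushVec_of_last_nonpos (h : y (Fin.last n) ≤ 0) : pushVec y t = y := by
  rw [pushVec, max_eq_right h, mul_zero, zero_smul, add_zero]

lemma pushVec_one_of_last_eq_one (h : y (Fin.last n) = 1) : pushVec y 1 = 1 := by
  rw [pushVec, h, max_eq_left zero_le_one, one_mul, one_smul, add_sub_cancel]

lemma last_le_pushVec_last (hy : ‖y‖ = 1) (ht : 0 ≤ t) :
    y (Fin.last n) ≤ pushVec y t (Fin.last n) := by
  have hlast : y (Fin.last n) ≤ 1 := (le_abs_self _).trans (hy ▸ norm_le_pi_norm y _)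
  have : 0 ≤ t * max (y (Fin.last n)) 0 * (1 - y (Fin.last n)) :=
    mul_nonneg (mul_nonneg ht (le_max_right _ _)) (by linarith)
  simpa [pushVec] using this

lemma pushVec_ne_zero (hy : ‖y‖ = 1) (ht : 0 ≤ t) : pushVec y t ≠ 0 := by
  rcases le_or_gt (y (Fin.last n)) 0 with h | h
  · rw [pushVec_of_last_nonpos h]
    exact norm_ne_zero_iff.1 (hy ▸ one_ne_zero)
  · intro h0
    have := last_le_pushVec_last hy ht
    rw [h0] at this
    exact (h.trans_le this).ne rfl

lemma pushVec_mem_capJ (hy : ‖y‖ = 1) (ht : 0 ≤ t) (hJ : y ∈ capJ n) : pushVec y t ∈ capJ n := by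
  rcases le_or_gt (y (Fin.last n)) 0 with h | h
  · rwa [pushVec_of_last_nonpos h]
  · exact (neg_nonpos.2 (norm_nonneg _)).trans (h.le.trans (last_le_pushVec_last hy ht))

noncomputable def deform (y : Fin (n + 1) → ℝ) (t : ℝ) : Fin (n + 1) → ℝ :=
  radialProj (pushVec (radialProj (liftVec y t)) t)

lemma norm_radialProj_liftVec (hy : ‖y‖ = 1) : ‖radialProj (liftVec y t)‖ = 1 :=
  norm_radialProj (liftVec_ne_zero (norm_ne_zero_iff.1 (hy ▸ one_ne_zero)))

lemma norm_deform (hy : ‖y‖ = 1) (ht : 0 ≤ t) : ‖deform y t‖ = 1 :=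
  norm_radialProj (pushVec_ne_zero (norm_radialProj_liftVec hy) ht)

lemma deform_mem_capJ (hy : ‖y‖ = 1) (ht : 0 ≤ t) (hJ : y ∈ capJ n) : deform y t ∈ capJ n :=
  radialProj_mem_capJ (pushVec_mem_capJ (norm_radialProj_liftVec hy) ht
    (radialProj_mem_capJ (liftVec_mem_capJ hy ht hJ)))

lemma deform_zero (hy : ‖y‖ = 1) : deform y 0 = y := by
  rw [deform, liftVec_zero, radialProj_of_norm_eq_one hy, pushVec_zero,
    radialProj_of_norm_eq_one hy]

lemma deform_one_left : deform (1 : Fin (n + 1) → ℝ) t = 1 := by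
  rw [deform, liftVec_of_last_eq_one rfl, radialProj_of_norm_eq_one norm_one, pushVec_one_left,
    radialProj_of_norm_eq_one norm_one]

lemma deform_one (hy : ‖y‖ = 1) (hJ : y ∈ capJ n) : deform y 1 = 1 := by
  rw [deform, liftVec_one hy hJ, radialProj_of_norm_eq_one (norm_update_last_one hy),
    pushVec_one_of_last_eq_one (Function.update_self _ _ _), radialProj_of_norm_eq_one norm_one]

lemma Continuous.deform {α : Type*} [TopologicalSpace α] {y : α → Fin (n + 1) → ℝ} {t : α → ℝ}
    (hy : Continuous y) (ht : Continuous t) (hy1 : ∀ a, ‖y a‖ = 1) (ht0 : ∀ a, 0 ≤ t a) :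
    Continuous fun a => deform (y a) (t a) := by
  have hlift := (continuous_liftVec.comp (hy.prodMk ht)).radialProj
    fun a => liftVec_ne_zero (norm_ne_zero_iff.1 ((hy1 a).symm ▸ one_ne_zero))
  exact (continuous_pushVec.comp (hlift.prodMk ht)).radialProj
    fun a => pushVec_ne_zero (norm_radialProj_liftVec (hy1 a)) (ht0 a)

end Deformation

section BoundaryDeformation

variable {n : ℕ}

def jFace (n : ℕ) : Set (bdry (n + 1)) := {p | recenter p.1 ∈ capJ n}

lemma isClosed_jFace : IsClosed (jFace n) :=
  isClosed_capJ.preimage (continuous_recenter.comp continuous_subtype_val)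

lemma mem_jFace_of_last_ne {p : bdry (n + 1)} (h : p.1 (Fin.last n) ≠ 0) : p ∈ jFace n :=
  mem_capJ_of_last_ne (norm_recenter_val p) fun h' => h (by simp only [recenter] at h'; linarith)

lemma init_mem_bdry_of_mem_jFace {p : bdry (n + 1)} (h0 : p.1 (Fin.last n) = 0)
    (hJ : p ∈ jFace n) : Fin.init p.1 ∈ bdry n := by
  rcases norm_init_eq_one_or_last_eq_one (norm_recenter_val p) hJ with h | h
  · exact mem_bdry_iff.2 h
  · simp only [recenter, h0] at h
    norm_num at h

lemma recenter_cornerPt : recenter (cornerPt n).1 = 1 := by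
  funext j
  simp only [recenter, cornerPt]
  norm_num

noncomputable def bdryDeform (z : bdry (n + 1) × unitInterval) : bdry (n + 1) :=
  (bdryHomeo (n + 1)).symm ⟨deform (recenter z.1.1) z.2,
    mem_sphere_zero_iff_norm.2 (norm_deform (norm_recenter_val z.1) z.2.2.1)⟩

lemma recenter_bdryDeform (z : bdry (n + 1) × unitInterval) :
    recenter (bdryDeform z).1 = deform (recenter z.1.1) z.2 := by
  rw [← bdryHomeo_apply, bdryDeform, Homeomorph.apply_symm_apply]

lemma bdryDeform_eq_iff {z : bdry (n + 1) × unitInterval} {p : bdry (n + 1)} :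
    bdryDeform z = p ↔ deform (recenter z.1.1) z.2 = recenter p.1 := by
  rw [← recenter_bdryDeform, ← bdryHomeo_apply, ← bdryHomeo_apply, Subtype.coe_inj,
    (bdryHomeo (n + 1)).injective.eq_iff]

lemma continuous_bdryDeform : Continuous (bdryDeform (n := n)) := by
  refine (bdryHomeo (n + 1)).symm.continuous.comp (Continuous.subtype_mk ?_ _)
  exact Continuous.deform (continuous_recenter.comp (continuous_subtype_val.comp continuous_fst))
    (continuous_subtype_val.comp continuous_snd) (fun z => norm_recenter_val z.1) fun z => z.2.2.1

lemma bdryDeform_zero (p : bdry (n + 1)) : bdryDeform (p, 0) = p :=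
  bdryDeform_eq_iff.2 (by rw [Set.Icc.coe_zero]; exact deform_zero (norm_recenter_val p))

lemma bdryDeform_cornerPt (t : unitInterval) : bdryDeform (cornerPt n, t) = cornerPt n :=
  bdryDeform_eq_iff.2 (by simp only [recenter_cornerPt]; exact deform_one_left)

lemma bdryDeform_mem_jFace {p : bdry (n + 1)} (hp : p ∈ jFace n) (t : unitInterval) :
    bdryDeform (p, t) ∈ jFace n := by
  change recenter (bdryDeform (p, t)).1 ∈ capJ n
  rw [recenter_bdryDeform]
  exact deform_mem_capJ (norm_recenter_val p) t.2.1 hp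

lemma bdryDeform_one {p : bdry (n + 1)} (hp : p ∈ jFace n) : bdryDeform (p, 1) = cornerPt n :=
  bdryDeform_eq_iff.2 (by
    rw [recenter_cornerPt, Set.Icc.coe_one]; exact deform_one (norm_recenter_val p) hp)

end BoundaryDeformation

section BottomFace

variable {n : ℕ} {x₀ : X}

lemma frontier_bottom_subset :
    frontier {p : bdry (n + 1) | p.1 (Fin.last n) = 0} ⊆ {p | Fin.init p.1 ∈ bdry n} := by
  set B := {p : bdry (n + 1) | p.1 (Fin.last n) = 0}
  have hB : IsClosed B :=
    isClosed_eq ((continuous_apply _).comp continuous_subtype_val) continuous_const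
  have hBc : closure Bᶜ ⊆ jFace n :=
    isClosed_jFace.closure_subset_iff.2 fun q hq => mem_jFace_of_last_ne hq
  intro p hp
  exact init_mem_bdry_of_mem_jFace (hB.frontier_subset hp)
    (hBc (frontier_eq_closure_inter_closure.subset hp).2)

lemma Continuous.if_last_eq_zero {α : Type*} [TopologicalSpace α] {φ : α → bdry (n + 1)}
    (hφ : Continuous φ) {F : α → X} (hF : Continuous F)
    (hF₀ : ∀ a, Fin.init (φ a).1 ∈ bdry n → F a = x₀) :
    Continuous fun a => if (φ a).1 (Fin.last n) = 0 then F a else x₀ :=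
  Continuous.if (fun a ha => hF₀ a (frontier_bottom_subset (hφ.frontier_preimage_subset _ ha)))
    hF continuous_const

lemma continuous_init_val : Continuous fun p : bdry (n + 1) => Fin.init p.1 :=
  continuous_pi fun _ => (continuous_apply _).comp continuous_subtype_val

lemma isSphMap_sphExt {f : (Fin n → ℝ) → X} (hf : IsAbsMap n x₀ f) :
    IsSphMap n x₀ (sphExt n x₀ f) :=
  ⟨continuous_id.if_last_eq_zero (hf.1.comp continuous_init_val) fun _ hp => hf.2 _ hp,
    if_neg (by norm_num [cornerPt])⟩

lemma sphExt_congr {Y : Type*} {y₀ : Y} {f g : (Fin n → ℝ) → Y} (h : ∀ t ∈ cube n, f t = g t)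
    (p : bdry (n + 1)) : sphExt n y₀ f p = sphExt n y₀ g p := by
  unfold sphExt
  split_ifs
  exacts [h _ fun i => p.2.1 i.castSucc, rfl]

lemma sphExt_of_mem_jFace {f : (Fin n → ℝ) → X} (hf : IsAbsMap n x₀ f) {p : bdry (n + 1)}
    (hp : p ∈ jFace n) : sphExt n x₀ f p = x₀ := by
  unfold sphExt
  split_ifs with h0
  · exact hf.2 _ (init_mem_bdry_of_mem_jFace h0 hp)
  · rfl

noncomputable def bottomIncl (t : Fin n → ℝ) : bdry (n + 1) :=
  ⟨Fin.snoc (α := fun _ => ℝ) (fun i => (Set.projIcc 0 1 zero_le_one (t i) : ℝ)) 0,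
    fun j => by
      induction j using Fin.lastCases with
      | last => simp
      | cast i => simp [(Set.projIcc 0 1 zero_le_one (t i)).2],
    Fin.last n, Or.inl (Fin.snoc_last _ _)⟩

lemma continuous_bottomIncl : Continuous (bottomIncl (n := n)) := by
  refine Continuous.subtype_mk ?_ _
  exact Continuous.finSnoc (A := fun _ => ℝ) (continuous_pi fun i =>
    continuous_subtype_val.comp (continuous_projIcc.comp (continuous_apply i))) continuous_const

lemma bottomIncl_last (t : Fin n → ℝ) : (bottomIncl t).1 (Fin.last n) = 0 := by
  simp [bottomIncl]

lemma init_bottomIncl {t : Fin n → ℝ} (ht : t ∈ cube n) : Fin.init (bottomIncl t).1 = t := by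
  funext i
  simp [bottomIncl, Fin.init_snoc, Set.projIcc_of_mem _ (ht i)]

lemma bottomIncl_init {p : bdry (n + 1)} (h0 : p.1 (Fin.last n) = 0) :
    bottomIncl (Fin.init p.1) = p := by
  ext j
  induction j using Fin.lastCases with
  | last => rw [bottomIncl_last, h0]
  | cast i => simp [bottomIncl, Fin.init, Set.projIcc_of_mem _ (p.2.1 i.castSucc)]

lemma bottomIncl_mem_jFace {t : Fin n → ℝ} (ht : t ∈ bdry n) : bottomIncl t ∈ jFace n := by
  change -‖Fin.init (recenter (bottomIncl t).1)‖ ≤ recenter (bottomIncl t).1 (Fin.last n)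
  have h : Fin.init (recenter (bottomIncl t).1) = recenter (Fin.init (bottomIncl t).1) := rfl
  rw [h, init_bottomIncl ht.1, mem_bdry_iff.1 ht, recenter, bottomIncl_last]
  norm_num

lemma sphExt_bottomIncl {Y : Type*} {y₀ : Y} {f : (Fin n → ℝ) → Y}
    {t : Fin n → ℝ} (ht : t ∈ cube n) : sphExt n y₀ f (bottomIncl t) = f t := by
  rw [sphExt, if_pos (bottomIncl_last t)]
  exact congrArg f (init_bottomIncl ht)

end BottomFace

section HomotopySets

variable {n : ℕ} {x₀ : X}

noncomputable def absToSph (f : {f : (Fin n → ℝ) → X // IsAbsMap n x₀ f}) :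
    {g : bdry (n + 1) → X // IsSphMap n x₀ g} :=
  ⟨sphExt n x₀ f.1, isSphMap_sphExt f.2⟩

noncomputable def sphToAbs (g : {g : bdry (n + 1) → X // IsSphMap n x₀ g}) :
    {f : (Fin n → ℝ) → X // IsAbsMap n x₀ f} :=
  ⟨fun t => g.1 (bdryDeform (bottomIncl t, 1)),
    g.2.1.comp (continuous_bdryDeform.comp (continuous_bottomIncl.prodMk continuous_const)),
    fun _ ht => (congrArg g.1 (bdryDeform_one (bottomIncl_mem_jFace ht))).trans g.2.2⟩

lemma sphHtp_absToSph {f f' : {f : (Fin n → ℝ) → X // IsAbsMap n x₀ f}} (h : AbsHtp n x₀ f f') :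
    SphHtp n x₀ (absToSph f) (absToSph f') := by
  obtain ⟨H, hH, h0, h1, hbd⟩ := h
  refine ⟨fun z => sphExt n x₀ (fun t => H (t, Set.projIcc 0 1 zero_le_one z.2)) z.1, ?_,
    fun p => sphExt_congr (fun t ht => by simpa using h0 t ht) p,
    fun p => sphExt_congr (fun t ht => by simpa using h1 t ht) p,
    fun s _ => if_neg (by norm_num [cornerPt])⟩
  exact continuous_fst.if_last_eq_zero
    (hH.comp (continuous_init_val.prodMap (continuous_subtype_val.comp continuous_projIcc)))
    fun z hz => hbd _ (Set.projIcc 0 1 zero_le_one z.2).2 _ hz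

lemma absHtp_sphToAbs {g g' : {g : bdry (n + 1) → X // IsSphMap n x₀ g}} (h : SphHtp n x₀ g g') :
    AbsHtp n x₀ (sphToAbs g) (sphToAbs g') := by
  obtain ⟨H, hH, h0, h1, hcorner⟩ := h
  refine ⟨fun z => H (bdryDeform (bottomIncl z.1, 1), z.2), ?_, fun t _ => h0 _, fun t _ => h1 _,
    fun s hs t ht => ?_⟩
  · exact hH.comp (((continuous_bdryDeform.comp
      (continuous_bottomIncl.prodMk continuous_const)).comp continuous_fst).prodMk continuous_snd)
  · simpa only [bdryDeform_one (bottomIncl_mem_jFace ht)] using hcorner s hs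

lemma absHtp_sphToAbs_absToSph (f : {f : (Fin n → ℝ) → X // IsAbsMap n x₀ f}) :
    AbsHtp n x₀ (sphToAbs (absToSph f)) f := by
  refine ⟨fun z =>
      sphExt n x₀ f.1 (bdryDeform (bottomIncl z.1, Set.projIcc 0 1 zero_le_one (1 - z.2))),
    ?_, fun t _ => ?_, fun t ht => ?_, fun s _ t ht => ?_⟩
  · exact (isSphMap_sphExt f.2).1.comp (continuous_bdryDeform.comp
      ((continuous_bottomIncl.comp continuous_fst).prodMk
        (continuous_projIcc.comp (continuous_const.sub continuous_snd))))
  · simp [sphToAbs, absToSph]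
  · simp [bdryDeform_zero, sphExt_bottomIncl ht]
  · exact sphExt_of_mem_jFace f.2 (bdryDeform_mem_jFace (bottomIncl_mem_jFace ht) _)

lemma sphExt_sphToAbs (g : {g : bdry (n + 1) → X // IsSphMap n x₀ g}) (p : bdry (n + 1)) :
    sphExt n x₀ (sphToAbs g).1 p = g.1 (bdryDeform (p, 1)) := by
  unfold sphExt
  split_ifs with h0
  · exact congrArg (fun q => g.1 (bdryDeform (q, 1))) (bottomIncl_init h0)
  · rw [bdryDeform_one (mem_jFace_of_last_ne h0), g.2.2]

lemma sphHtp_absToSph_sphToAbs (g : {g : bdry (n + 1) → X // IsSphMap n x₀ g}) :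
    SphHtp n x₀ (absToSph (sphToAbs g)) g := by
  refine ⟨fun z => g.1 (bdryDeform (z.1, Set.projIcc 0 1 zero_le_one (1 - z.2))), ?_,
    fun p => ?_, fun p => ?_, fun s _ => ?_⟩
  · exact g.2.1.comp (continuous_bdryDeform.comp (continuous_fst.prodMk
      (continuous_projIcc.comp (continuous_const.sub continuous_snd))))
  · simp [absToSph, sphExt_sphToAbs]
  · simp [bdryDeform_zero]
  · exact (congrArg g.1 (bdryDeform_cornerPt _)).trans g.2.2

end HomotopySets

/-- `πₙ(X,x₀) ≅ [∂Iⁿ⁺¹, e ; X, x₀]`: the map induced by `sphExt` is a well-defined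
bijection between the homotopy sets. -/
theorem stmt_13 (n : ℕ) (x₀ : X) :
    ∃ Φ : Quot (AbsHtp n x₀) → Quot (SphHtp n x₀),
      Function.Bijective Φ ∧
      ∀ (f : (Fin n → ℝ) → X) (hf : IsAbsMap n x₀ f),
        ∃ hc : IsSphMap n x₀ (sphExt n x₀ f),
          Φ (Quot.mk _ ⟨f, hf⟩) = Quot.mk _ ⟨sphExt n x₀ f, hc⟩ := by
  refine ⟨Quot.map absToSph fun _ _ => sphHtp_absToSph, ?_, fun f hf => ⟨isSphMap_sphExt hf, rfl⟩⟩
  exact Function.bijective_iff_has_inverse.2 ⟨Quot.map sphToAbs fun _ _ => absHtp_sphToAbs,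
    Quot.ind fun f => Quot.sound (absHtp_sphToAbs_absToSph f),
    Quot.ind fun g => Quot.sound (sphHtp_absToSph_sphToAbs g)⟩
end
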